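/- For every x ∈ ℂ⁴ with x ≠ 0, q(x) = 0 and f0(x) = 0, the two gradient vectors ∇q(x) and ∇f0(x) are linearly independent over ℂ (equivalently, the 2×4 Jacobian matrix of (q, f0) at x has rank 2). Hence the curve C8 = {q = 0, f0 = 0} in ℙ³(ℂ) is smooth. -/

import Mathlib

/-!
Since `∇q = 2x` and `∇f0 = 4x³`, a relation `s • x + t • x³ = 0` with `t ≠ 0` forces every
nonzero coordinate to satisfy `xᵢ² = -s/t`. Then `q(x) = k · (-s/t)` with `k ≥ 1` the number of
nonzero coordinates, so `q(x) = 0` gives `-s/t = 0`, contradicting `xᵢ ≠ 0`.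
-/

open MvPolynomial

noncomputable def q : MvPolynomial (Fin 4) ℂ := X 0 ^ 2 + X 1 ^ 2 + X 2 ^ 2 + X 3 ^ 2
noncomputable def f0 : MvPolynomial (Fin 4) ℂ := X 0 ^ 4 + X 1 ^ 4 + X 2 ^ 4 + X 3 ^ 4

/-- The gradient of a polynomial at a point. -/
noncomputable def grad (F : MvPolynomial (Fin 4) ℂ) (x : Fin 4 → ℂ) : Fin 4 → ℂ :=
  fun i => eval x (pderiv i F)

section SelfCube

variable {ι K : Type*} [Field K]

lemma sq_eq_neg_div_of_smul_add_smul_cube_eq_zero {x : ι → K} {s t : K} (ht : t ≠ 0)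
    (h : s • x + t • x ^ 3 = 0) {i : ι} (hi : x i ≠ 0) : x i ^ 2 = -s / t := by
  have hi' : x i * (s + t * x i ^ 2) = 0 := by
    have := congrFun h i
    simp only [Pi.add_apply, Pi.smul_apply, Pi.pow_apply, smul_eq_mul, Pi.zero_apply] at this
    linear_combination this
  rw [eq_div_iff ht]
  linear_combination (mul_eq_zero.mp hi').resolve_left hi

theorem linearIndependent_self_cube_of_sum_sq_eq_zero [Fintype ι] [CharZero K] {x : ι → K}
    (hx : x ≠ 0) (hsum : ∑ i, x i ^ 2 = 0) : LinearIndependent K ![x, x ^ 3] := by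
  classical
  rw [LinearIndependent.pair_iff]
  intro s t h
  obtain ⟨i₀, hi₀⟩ := Function.ne_iff.mp hx
  have ht : t = 0 := by
    by_contra ht
    set S := Finset.univ.filter (x · ≠ 0)
    have hsum_S : ∑ i, x i ^ 2 = S.card • (-s / t) := by
      rw [← Finset.sum_filter_of_ne fun i _ hi => by simpa using hi,
        ← Finset.sum_const]
      exact Finset.sum_congr rfl fun i hi =>
        sq_eq_neg_div_of_smul_add_smul_cube_eq_zero ht h (Finset.mem_filter.mp hi).2
    have hS : S.card ≠ 0 := Finset.card_ne_zero.mpr ⟨i₀, by simpa [S] using hi₀⟩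
    have hc : -s / t = 0 := by
      simpa [hS] using hsum_S.symm.trans hsum
    exact hi₀ (pow_eq_zero_iff two_ne_zero |>.mp
      ((sq_eq_neg_div_of_smul_add_smul_cube_eq_zero ht h hi₀).trans hc))
  subst ht
  refine ⟨?_, rfl⟩
  simpa [hx] using h

end SelfCube

lemma eval_q (x : Fin 4 → ℂ) : eval x q = ∑ i, x i ^ 2 := by
  simp [q, Fin.sum_univ_four]

lemma grad_q (x : Fin 4 → ℂ) : grad q x = (2 : ℂ) • x := by
  funext i; fin_cases i <;> simp [grad, q]

lemma grad_f0 (x : Fin 4 → ℂ) : grad f0 x = (4 : ℂ) • x ^ 3 := by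
  funext i; fin_cases i <;> simp [grad, f0]

theorem stmt12_general (x : Fin 4 → ℂ) (hx : x ≠ 0)
    (hq : eval x q = 0) :
    LinearIndependent ℂ ![grad q x, grad f0 x] := by
  rw [grad_q, grad_f0, LinearIndependent.pair_smul_smul_iff (by norm_num) (by norm_num)]
  exact linearIndependent_self_cube_of_sum_sq_eq_zero hx (eval_q x ▸ hq)

theorem stmt12 (x : Fin 4 → ℂ) (hx : x ≠ 0)
    (hq : eval x q = 0) (hf0 : eval x f0 = 0) :
    LinearIndependent ℂ ![grad q x, grad f0 x] :=
  stmt12_general x hx hq
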